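/- Let 𝔇 ≥ 1 be an integer and q an odd positive integer. Let c₁, c₂, d₁, d₂ and c₁′, c₂′, d₁′, d₂′ be integers with associated coefficients (A, B, C₀, D₀, E) and (A′, B′, C₀′, D₀′, E′) given by A = c₁² + 𝔇c₂², B = 𝔇A, C₀ = 2(c₁d₁ + 𝔇c₂d₂), D₀ = 2𝔇(c₁d₂ − c₂d₁), E = A + d₁² + 𝔇d₂² (and similarly for the primed data), and let ξ, ζ, ξ′, ζ′ be any integers. Then |S(q)| ≤ 𝔇 · gcd(q, A) · gcd(q, A′) / q, where S(q) = ∑_{r mod q, gcd(r,q)=1} S_{A,B,C₀,D₀}(q, r, ξ, ζ) · conj(S_{A′,B′,C₀′,D₀′}(q, r, ξ′, ζ′)) · e_q((E − E′)r). -/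

import Mathlib

/-- `e_q(t) = exp(2πit/q)`. -/
noncomputable def eq' (q : ℕ) (t : ℤ) : ℂ :=
  Complex.exp (2 * Real.pi * Complex.I * t / q)

/-- The normalized complete exponential sum
`S_{A,B,C,D}(q, r, ξ, ζ) = q⁻² ∑_{x₀,y₀ mod q} e_q(r(Ax₀² + Cx₀) − ξx₀) e_q(r(By₀² + Dy₀) − ζy₀)`. -/
noncomputable def Snorm (q : ℕ) (A B C D ξ ζ r : ℤ) : ℂ :=
  ((q : ℂ) ^ 2)⁻¹ * ∑ x ∈ Finset.range q, ∑ y ∈ Finset.range q,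
    eq' q (r * (A * (x : ℤ) ^ 2 + C * (x : ℤ)) - ξ * (x : ℤ))
      * eq' q (r * (B * (y : ℤ) ^ 2 + D * (y : ℤ)) - ζ * (y : ℤ))

/-- Coefficients of the shifted binary quadratic form attached to `(c₁, c₂, d₁, d₂)`. -/
def coA (𝔇 : ℕ) (c₁ c₂ : ℤ) : ℤ := c₁ ^ 2 + (𝔇 : ℤ) * c₂ ^ 2
def coC (𝔇 : ℕ) (c₁ c₂ d₁ d₂ : ℤ) : ℤ := 2 * (c₁ * d₁ + (𝔇 : ℤ) * c₂ * d₂)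
def coD (𝔇 : ℕ) (c₁ c₂ d₁ d₂ : ℤ) : ℤ := 2 * (𝔇 : ℤ) * (c₁ * d₂ - c₂ * d₁)
def coE (𝔇 : ℕ) (c₁ c₂ d₁ d₂ : ℤ) : ℤ :=
  c₁ ^ 2 + (𝔇 : ℤ) * c₂ ^ 2 + d₁ ^ 2 + (𝔇 : ℤ) * d₂ ^ 2

/-- The averaged sum `S(q) = ∑'_{r mod q} S_{A,...}(q,r,ξ,ζ) conj(S_{A',...}(q,r,ξ',ζ'))
e_q((E − E')r)`, where `∑'` runs over residues coprime to `q`. -/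
noncomputable def Savg (𝔇 : ℕ) (c₁ c₂ d₁ d₂ c₁' c₂' d₁' d₂' ξ ζ ξ' ζ' : ℤ) (q : ℕ) : ℂ :=
  ∑ r ∈ (Finset.range q).filter (fun r => Nat.Coprime r q),
    Snorm q (coA 𝔇 c₁ c₂) ((𝔇 : ℤ) * coA 𝔇 c₁ c₂) (coC 𝔇 c₁ c₂ d₁ d₂)
        (coD 𝔇 c₁ c₂ d₁ d₂) ξ ζ (r : ℤ)
      * (starRingEnd ℂ) (Snorm q (coA 𝔇 c₁' c₂') ((𝔇 : ℤ) * coA 𝔇 c₁' c₂')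
          (coC 𝔇 c₁' c₂' d₁' d₂') (coD 𝔇 c₁' c₂' d₁' d₂') ξ' ζ' (r : ℤ))
      * eq' q ((coE 𝔇 c₁ c₂ d₁ d₂ - coE 𝔇 c₁' c₂' d₁' d₂') * (r : ℤ))

/-!
Each normalized sum factors as `q⁻² T_A T_B` with `T_A = ∑ₓ e_q(r(Ax² + C₀x) − ξx)`. Weyl
differencing (`x = y + h`) and orthogonality of additive characters give
`|T_A|² ≤ q · #{h mod q : 2rAh ≡ 0} ≤ q · gcd(q, A)`, because `2r` is invertible modulo the odd
`q`. Since `B = 𝔇A` and `gcd(q, 𝔇A) ≤ 𝔇 gcd(q, A)`, this gives `|S| ≤ √𝔇 gcd(q, A) / q`, and the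
claim follows by summing the product bound over the at most `q` residues `r`.
-/

open Finset ComplexConjugate

section QuadraticSum

variable {R K : Type*} [CommRing R] [Fintype R] [DecidableEq R] [RCLike K]

theorem AddChar.norm_sum_quadratic_sq_le {ψ : AddChar R K} (hψ : ψ.IsPrimitive) (a b : R) :
    ‖∑ x, ψ (a * x ^ 2 + b * x)‖ ^ 2 ≤ Fintype.card R * #{h | 2 * a * h = 0} := by
  set f : R → R := fun x => a * x ^ 2 + b * x
  have hdiff (y h : R) : f (y + h) - f y = f h + y * (2 * a * h) := by simp only [f]; ring
  have hsq : ((‖∑ x, ψ (f x)‖ : ℝ) : K) ^ 2 = ∑ h, ψ (f h) * ∑ y, ψ (y * (2 * a * h)) := by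
    rw [← RCLike.mul_conj, map_sum, sum_mul_sum, sum_comm]
    calc ∑ y, ∑ x, ψ (f x) * conj (ψ (f y))
        = ∑ y, ∑ h, ψ (f (y + h) - f y) := by
          refine sum_congr rfl fun y _ => ?_
          rw [← Equiv.sum_comp (Equiv.addLeft y)]
          simp [sub_eq_add_neg, AddChar.map_add_eq_mul, AddChar.map_neg_eq_conj]
      _ = ∑ h, ψ (f h) * ∑ y, ψ (y * (2 * a * h)) := by
          simp only [hdiff, AddChar.map_add_eq_mul, mul_sum]
          exact sum_comm
  calc ‖∑ x, ψ (f x)‖ ^ 2 = ‖∑ h, ψ (f h) * ∑ y, ψ (y * (2 * a * h))‖ := by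
        rw [← hsq, norm_pow, RCLike.norm_ofReal, abs_norm]
    _ ≤ ∑ h, ‖ψ (f h) * ∑ y, ψ (y * (2 * a * h))‖ := norm_sum_le _ _
    _ = ∑ h, if 2 * a * h = 0 then (Fintype.card R : ℝ) else 0 := by
        refine sum_congr rfl fun h _ => ?_
        rw [norm_mul, AddChar.norm_apply, one_mul, AddChar.sum_mulShift _ hψ]
        split_ifs <;> simp
    _ = Fintype.card R * #{h | 2 * a * h = 0} := by
        rw [← sum_filter, sum_const, nsmul_eq_mul, mul_comm]

end QuadraticSum

lemma Nat.div_gcd_dvd_of_dvd_mul {q a n : ℕ} (hq : 0 < q) (h : q ∣ a * n) : q / q.gcd a ∣ n := by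
  have hg : 0 < q.gcd a := Nat.gcd_pos_of_pos_left a hq
  refine (Nat.coprime_div_gcd_div_gcd hg).dvd_of_dvd_mul_left ?_
  rw [Nat.div_mul_right_comm (Nat.gcd_dvd_right q a)]
  exact Nat.div_dvd_div (Nat.gcd_dvd_left q a) h

lemma ZMod.card_filter_intCast_mul_eq_zero_le (q : ℕ) [NeZero q] (A : ℤ) :
    #{h : ZMod q | (A : ZMod q) * h = 0} ≤ Int.gcd q A := by
  set g := Int.gcd q A
  set m := q / g
  have hq : 0 < q := Nat.pos_of_neZero q
  have hmg : m * g = q := Nat.div_mul_cancel (Nat.gcd_dvd_left q A.natAbs)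
  have hm : 0 < m := Nat.pos_of_ne_zero fun h => by simp [h] at hmg; omega
  have hker : ∀ h : ZMod q, (A : ZMod q) * h = 0 → m ∣ h.val := by
    intro h hh
    have hz : (q : ℤ) ∣ A * h.val := by
      rw [← ZMod.intCast_zmod_eq_zero_iff_dvd]
      simpa using hh
    have hz' := Int.natAbs_dvd_natAbs.2 hz
    rw [Int.natAbs_mul, Int.natAbs_natCast, Int.natAbs_natCast] at hz'
    exact Nat.div_gcd_dvd_of_dvd_mul hq hz'
  calc #{h : ZMod q | (A : ZMod q) * h = 0}
      ≤ #((range g).image fun k => ((k * m : ℕ) : ZMod q)) := by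
        refine card_le_card fun h hh => mem_image.2 ⟨h.val / m, mem_range.2 ?_, ?_⟩
        · rw [Nat.div_lt_iff_lt_mul hm]
          exact (ZMod.val_lt h).trans_eq (by rw [mul_comm, hmg])
        · rw [Nat.div_mul_cancel (hker h (mem_filter.1 hh).2), ZMod.natCast_zmod_val]
    _ ≤ g := card_image_le.trans (card_range g).le

lemma Int.gcd_mul_right_le {k : ℤ} (hk : k ≠ 0) (m n : ℤ) :
    Int.gcd m (k * n) ≤ k.natAbs * Int.gcd m n := by
  have hdvd : Int.gcd m (k * n) ∣ k.natAbs * Int.gcd m n :=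
    Int.gcd_mul_left k m n ▸ Int.gcd_dvd_gcd_mul_left_left m (k * n) k
  rcases eq_or_ne (Int.gcd m n) 0 with h0 | h0
  · obtain ⟨rfl, rfl⟩ := Int.gcd_eq_zero_iff.1 h0
    simp
  · exact Nat.le_of_dvd (Nat.mul_pos (Int.natAbs_pos.2 hk) (Nat.pos_of_ne_zero h0)) hdvd

lemma eq'_eq_stdAddChar (q : ℕ) [NeZero q] (t : ℤ) : eq' q t = ZMod.stdAddChar (t : ZMod q) :=
  (ZMod.stdAddChar_coe t).symm

lemma sum_range_natCast_eq_sum_zmod {M : Type*} [AddCommMonoid M] (q : ℕ) [NeZero q]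
    (f : ZMod q → M) : ∑ x ∈ range q, f x = ∑ x : ZMod q, f x :=
  sum_nbij' (↑) ZMod.val (by simp) (by simp [ZMod.val_lt])
    (fun x hx => ZMod.val_cast_of_lt (mem_range.1 hx)) (fun x _ => ZMod.natCast_zmod_val x)
    (fun _ _ => rfl)

lemma norm_sum_range_eq'_sq_le {q : ℕ} (hq : Odd q) {r : ℤ} (hr : IsUnit (r : ZMod q))
    (A C ξ : ℤ) :
    ‖∑ x ∈ range q, eq' q (r * (A * (x : ℤ) ^ 2 + C * (x : ℤ)) - ξ * (x : ℤ))‖ ^ 2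
      ≤ q * Int.gcd q A := by
  have : NeZero q := ⟨hq.pos.ne'⟩
  have h2r : IsUnit (2 * r : ZMod q) := by
    simpa using ((ZMod.isUnit_iff_coprime 2 q).2 (Nat.coprime_two_left.2 hq)).mul hr
  have hsum : ∑ x ∈ range q, eq' q (r * (A * (x : ℤ) ^ 2 + C * (x : ℤ)) - ξ * (x : ℤ))
      = ∑ x : ZMod q,
          ZMod.stdAddChar (((r * A : ℤ) : ZMod q) * x ^ 2 + ((r * C - ξ : ℤ) : ZMod q) * x) := by
    rw [← sum_range_natCast_eq_sum_zmod]
    refine sum_congr rfl fun x _ => ?_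
    rw [eq'_eq_stdAddChar]
    push_cast
    ring_nf
  have hker : #{h : ZMod q | 2 * ((r * A : ℤ) : ZMod q) * h = 0}
      = #{h : ZMod q | (A : ZMod q) * h = 0} :=
    congrArg card <| filter_congr fun h _ => by
      rw [show 2 * ((r * A : ℤ) : ZMod q) * h = 2 * r * (A * h) by push_cast; ring,
        h2r.mul_right_eq_zero]
  rw [hsum]
  calc _ ≤ (Fintype.card (ZMod q) : ℝ) * #{h : ZMod q | 2 * ((r * A : ℤ) : ZMod q) * h = 0} :=
        AddChar.norm_sum_quadratic_sq_le (ZMod.isPrimitive_stdAddChar q) _ _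
    _ ≤ (q : ℝ) * Int.gcd q A := by
        rw [ZMod.card, hker]
        gcongr
        exact_mod_cast ZMod.card_filter_intCast_mul_eq_zero_le q A

lemma norm_Snorm_sq_le {q : ℕ} (hq : Odd q) {r : ℤ} (hr : IsUnit (r : ZMod q))
    (A B C D ξ ζ : ℤ) :
    ‖Snorm q A B C D ξ ζ r‖ ^ 2 ≤ Int.gcd q A * Int.gcd q B / (q : ℝ) ^ 2 := by
  set TA := ∑ x ∈ range q, eq' q (r * (A * (x : ℤ) ^ 2 + C * (x : ℤ)) - ξ * (x : ℤ))
  set TB := ∑ y ∈ range q, eq' q (r * (B * (y : ℤ) ^ 2 + D * (y : ℤ)) - ζ * (y : ℤ))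
  have hS : Snorm q A B C D ξ ζ r = ((q : ℂ) ^ 2)⁻¹ * (TA * TB) := by
    rw [Snorm, sum_mul_sum]
  have hA : ‖TA‖ ^ 2 ≤ q * Int.gcd q A := norm_sum_range_eq'_sq_le hq hr A C ξ
  have hB : ‖TB‖ ^ 2 ≤ q * Int.gcd q B := norm_sum_range_eq'_sq_le hq hr B D ζ
  have hq0 : (0 : ℝ) < q := by exact_mod_cast hq.pos
  rw [hS, norm_mul, norm_mul, norm_inv, norm_pow, Complex.norm_natCast, mul_pow, mul_pow]
  calc ((q : ℝ) ^ 2)⁻¹ ^ 2 * (‖TA‖ ^ 2 * ‖TB‖ ^ 2)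
      ≤ ((q : ℝ) ^ 2)⁻¹ ^ 2 * ((q * Int.gcd q A) * (q * Int.gcd q B)) := by gcongr
    _ = Int.gcd q A * Int.gcd q B / (q : ℝ) ^ 2 := by field_simp

lemma norm_Snorm_le {q : ℕ} (hq : Odd q) {r : ℤ} (hr : IsUnit (r : ZMod q)) {𝔇 : ℕ}
    (h𝔇 : 𝔇 ≠ 0) (A C D ξ ζ : ℤ) :
    ‖Snorm q A ((𝔇 : ℤ) * A) C D ξ ζ r‖ ≤ √𝔇 * Int.gcd q A / q := by
  have hgcd : (Int.gcd q ((𝔇 : ℤ) * A) : ℝ) ≤ 𝔇 * Int.gcd q A := by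
    have h := Int.gcd_mul_right_le (Int.natCast_ne_zero.2 h𝔇) q A
    rw [Int.natAbs_natCast] at h
    exact_mod_cast h
  rw [← pow_le_pow_iff_left₀ (norm_nonneg _) (by positivity) two_ne_zero, div_pow, mul_pow,
    Real.sq_sqrt (Nat.cast_nonneg _)]
  calc ‖Snorm q A ((𝔇 : ℤ) * A) C D ξ ζ r‖ ^ 2
      ≤ Int.gcd q A * Int.gcd q ((𝔇 : ℤ) * A) / (q : ℝ) ^ 2 := norm_Snorm_sq_le hq hr _ _ _ _ _ _
    _ ≤ Int.gcd q A * (𝔇 * Int.gcd q A) / (q : ℝ) ^ 2 := by gcongr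
    _ = 𝔇 * (Int.gcd q A : ℝ) ^ 2 / (q : ℝ) ^ 2 := by ring

theorem averaged_sum_trivial_bound_general (𝔇 : ℕ) (h𝔇 : 1 ≤ 𝔇) (q : ℕ) (hq : Odd q)
    (c₁ c₂ d₁ d₂ c₁' c₂' d₁' d₂' ξ ζ ξ' ζ' : ℤ) :
    ‖Savg 𝔇 c₁ c₂ d₁ d₂ c₁' c₂' d₁' d₂' ξ ζ ξ' ζ' q‖
      ≤ (𝔇 : ℝ) * (Int.gcd (q : ℤ) (coA 𝔇 c₁ c₂) : ℝ)
          * (Int.gcd (q : ℤ) (coA 𝔇 c₁' c₂') : ℝ) / (q : ℝ) := by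
  have : NeZero q := ⟨hq.pos.ne'⟩
  have hq0 : (0 : ℝ) < q := by exact_mod_cast hq.pos
  have h𝔇0 : 𝔇 ≠ 0 := Nat.one_le_iff_ne_zero.1 h𝔇
  set g : ℝ := (Int.gcd q (coA 𝔇 c₁ c₂) : ℝ)
  set g' : ℝ := (Int.gcd q (coA 𝔇 c₁' c₂') : ℝ)
  refine (norm_sum_le _ _).trans <|
    (sum_le_card_nsmul _ _ (𝔇 * g * g' / (q : ℝ) ^ 2) fun r hr => ?_).trans ?_
  · have hr : IsUnit ((r : ℤ) : ZMod q) := by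
      simpa using (ZMod.isUnit_iff_coprime r q).2 (mem_filter.1 hr).2
    rw [norm_mul, norm_mul, Complex.norm_conj, eq'_eq_stdAddChar, AddChar.norm_apply, mul_one]
    calc _ ≤ (√𝔇 * g / q) * (√𝔇 * g' / q) :=
          mul_le_mul (norm_Snorm_le hq hr h𝔇0 _ _ _ _ _) (norm_Snorm_le hq hr h𝔇0 _ _ _ _ _)
            (norm_nonneg _) (by positivity)
      _ = 𝔇 * g * g' / (q : ℝ) ^ 2 := by
          rw [div_mul_div_comm, mul_mul_mul_comm, Real.mul_self_sqrt (Nat.cast_nonneg _)]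
          ring
  · rw [nsmul_eq_mul]
    calc _ ≤ (q : ℝ) * (𝔇 * g * g' / (q : ℝ) ^ 2) := by
          gcongr
          exact_mod_cast (card_filter_le _ _).trans (card_range q).le
      _ = 𝔇 * g * g' / q := by field_simp

/-- For `𝔇 ≥ 1` and odd positive `q`, `|S(q)| ≤ 𝔇 · gcd(q,A) · gcd(q,A') / q`. -/
theorem averaged_sum_trivial_bound (𝔇 : ℕ) (h𝔇 : 1 ≤ 𝔇) (q : ℕ) (hq : Odd q)
    (hq0 : 0 < q) (c₁ c₂ d₁ d₂ c₁' c₂' d₁' d₂' ξ ζ ξ' ζ' : ℤ) :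
    ‖Savg 𝔇 c₁ c₂ d₁ d₂ c₁' c₂' d₁' d₂' ξ ζ ξ' ζ' q‖
      ≤ (𝔇 : ℝ) * (Int.gcd (q : ℤ) (coA 𝔇 c₁ c₂) : ℝ)
          * (Int.gcd (q : ℤ) (coA 𝔇 c₁' c₂') : ℝ) / (q : ℝ) :=
  averaged_sum_trivial_bound_general 𝔇 h𝔇 q hq c₁ c₂ d₁ d₂ c₁' c₂' d₁' d₂' ξ ζ ξ' ζ'
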